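/- arXiv:1110.5498 — 3 statements merged into one kernel-verified Lean document; each statement's English description precedes it below -/
import Mathlib

section
/- Let f : Z → X be a surjective 1-Lipschitz map between metric spaces, and suppose Z and X both have Hausdorff dimension n with μ_H^n(X) = μ_H^n(Z) < ∞. Then for every Borel subset A ⊆ Z with f⁻¹(f(A)) = A, one has μ_H^n(f(A)) = μ_H^n(A). -/
open MeasureTheory Set

/- Push `μ Z = μ A + μ Aᶜ` forward through `f`: surjectivity gives
`ν X ≤ ν (f A) + ν (f Aᶜ)`, and since `f` does not increase measure while the total masses agree
and are finite, neither `f A` nor `f Aᶜ` can lose any measure. -/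

theorem measure_image_eq_of_measure_image_le {Z X : Type*} [MeasurableSpace Z]
    [MeasurableSpace X] {μ : Measure Z} {ν : Measure X} {f : Z → X}
    (hsurj : Function.Surjective f) (himage : ∀ s, ν (f '' s) ≤ μ s)
    (huniv : ν univ = μ univ) (hfin : μ univ ≠ ⊤) {A : Set Z}
    (hA : NullMeasurableSet A μ) : ν (f '' A) = μ A := by
  refine le_antisymm (himage A) ?_
  have hcover : univ ⊆ f '' A ∪ f '' Aᶜ := by
    rw [← image_union, union_compl_self, image_univ, hsurj.range_eq]
  have hcompl : μ Aᶜ ≠ ⊤ := measure_ne_top_of_subset (subset_univ _) hfin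
  refine ENNReal.le_of_add_le_add_right hcompl ?_
  calc μ A + μ Aᶜ = ν univ := by rw [measure_add_measure_compl₀ hA, huniv]
    _ ≤ ν (f '' A ∪ f '' Aᶜ) := measure_mono hcover
    _ ≤ ν (f '' A) + ν (f '' Aᶜ) := measure_union_le _ _
    _ ≤ ν (f '' A) + μ Aᶜ := by gcongr; exact himage _

theorem LipschitzWith.hausdorffMeasure_image_le_of_one {Z X : Type*}
    [EMetricSpace Z] [MeasurableSpace Z] [BorelSpace Z]
    [EMetricSpace X] [MeasurableSpace X] [BorelSpace X] {f : Z → X}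
    (hf : LipschitzWith 1 f) {d : ℝ} (hd : 0 ≤ d) (s : Set Z) :
    μH[d] (f '' s) ≤ μH[d] s := by
  simpa using hf.hausdorffMeasure_image_le hd s

theorem volume_preserving_on_saturated_sets_general {Z X : Type*}
    [MetricSpace Z] [MeasurableSpace Z] [BorelSpace Z]
    [MetricSpace X] [MeasurableSpace X] [BorelSpace X]
    (f : Z → X) (hsurj : Function.Surjective f) (hf : LipschitzWith 1 f)
    (n : ℝ) (hn : 0 ≤ n)
    (heq : μH[n] (Set.univ : Set X) = μH[n] (Set.univ : Set Z))
    (hfin : μH[n] (Set.univ : Set Z) < ⊤)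
    (A : Set Z) (hA : MeasurableSet A) :
    μH[n] (f '' A) = μH[n] A :=
  measure_image_eq_of_measure_image_le hsurj (hf.hausdorffMeasure_image_le_of_one hn) heq
    hfin.ne hA.nullMeasurableSet

/-- If `f : Z → X` is a surjective 1-Lipschitz map between metric spaces of
Hausdorff dimension `n` with equal finite total `n`-dimensional Hausdorff
measure, then `f` preserves the `n`-dimensional Hausdorff measure of every
Borel set `A ⊆ Z` that is saturated under `f` (i.e. `f⁻¹(f(A)) = A`). -/
theorem volume_preserving_on_saturated_sets {Z X : Type*}
    [MetricSpace Z] [MeasurableSpace Z] [BorelSpace Z]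
    [MetricSpace X] [MeasurableSpace X] [BorelSpace X]
    (f : Z → X) (hsurj : Function.Surjective f) (hf : LipschitzWith 1 f)
    (n : ℝ) (hn : 0 ≤ n)
    (hdZ : dimH (Set.univ : Set Z) = ENNReal.ofReal n)
    (hdX : dimH (Set.univ : Set X) = ENNReal.ofReal n)
    (heq : μH[n] (Set.univ : Set X) = μH[n] (Set.univ : Set Z))
    (hfin : μH[n] (Set.univ : Set Z) < ⊤)
    (A : Set Z) (hA : MeasurableSet A) (hsat : f ⁻¹' (f '' A) = A) :
    μH[n] (f '' A) = μH[n] A :=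
  volume_preserving_on_saturated_sets_general f hsurj hf n hn heq hfin A hA
end

section
/- For ε > 0 and two balls of radius ε in Euclidean ℝⁿ whose centers are at distance s ∈ (0, 2ε], the volume of their union equals vol(B_ε(ℝⁿ)) + 2ε · vol(B_ε(ℝ^{n-1})) · ∫_θ^{π/2} sinⁿ(t) dt, where θ ∈ [0, π/2] satisfies cos θ = s/(2ε). -/
/-!
Move the centres to `0` and `s • e₀` by an isometry and slice both balls by the hyperplanes
`x₀ = t`. The slice of the union is the `(n-1)`-ball of radius `max (ρ t) (ρ (t - s))`, where
`ρ t = √(ε² - t²)`. Since `ρ` decreases in `|t|`, this is `ρ t` for `t ≤ s/2` and `ρ (t - s)`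
beyond; translating the second half back, the union has the volume of one ball plus that of the
slab `|t| < s/2` of a ball, which the substitution `t = ε cos u` evaluates.
-/

open MeasureTheory Real Set Metric Module
open scoped ENNReal

theorem volume_ball_union_ball_eq_of_dist_eq {E : Type*} [NormedAddCommGroup E]
    [InnerProductSpace ℝ E] [FiniteDimensional ℝ E] [MeasurableSpace E] [BorelSpace E]
    {x₁ x₂ y₁ y₂ : E} (h : dist x₁ x₂ = dist y₁ y₂) (r₁ r₂ : ℝ) :
    volume (ball x₁ r₁ ∪ ball x₂ r₂) = volume (ball y₁ r₁ ∪ ball y₂ r₂) := by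
  have h_norm : ‖x₂ - x₁‖ = ‖y₂ - y₁‖ := by
    rw [← dist_eq_norm, ← dist_eq_norm, dist_comm, h, dist_comm]
  set R := Submodule.reflection (ℝ ∙ ((x₂ - x₁) - (y₂ - y₁)))ᗮ
  have hR : R (x₂ - x₁) = y₂ - y₁ := Submodule.reflection_sub h_norm
  set Φ : E → E := fun x => R (x - x₁) + y₁
  have hΦ_mp : MeasurePreserving Φ :=
    (measurePreserving_add_right volume y₁).comp
      (R.measurePreserving.comp (measurePreserving_sub_right volume x₁))
  have hΦ_iso : Isometry Φ := Isometry.of_dist_eq fun x z => by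
    simp only [Φ, dist_add_right, R.dist_map, dist_sub_right]
  have hΦ₁ : Φ x₁ = y₁ := by simp [Φ]
  have hΦ₂ : Φ x₂ = y₂ := by simp only [Φ, hR, sub_add_cancel]
  calc volume (ball x₁ r₁ ∪ ball x₂ r₂)
      = volume (Φ ⁻¹' (ball (Φ x₁) r₁ ∪ ball (Φ x₂) r₂)) := by
        rw [preimage_union, hΦ_iso.preimage_ball, hΦ_iso.preimage_ball]
    _ = volume (ball y₁ r₁ ∪ ball y₂ r₂) := by
        rw [hΦ_mp.measure_preimage (isOpen_ball.union isOpen_ball).nullMeasurableSet, hΦ₁, hΦ₂]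

noncomputable def euclideanHeadTail (m : ℕ) :
    EuclideanSpace ℝ (Fin (m + 1)) ≃ᵐ ℝ × EuclideanSpace ℝ (Fin m) :=
  (MeasurableEquiv.toLp 2 _).symm.trans <|
    (MeasurableEquiv.piFinSuccAbove (fun _ => ℝ) 0).trans <|
      MeasurableEquiv.prodCongr (MeasurableEquiv.refl ℝ) (MeasurableEquiv.toLp 2 _)

section euclideanHeadTail

variable {m : ℕ}

@[simp]
theorem euclideanHeadTail_fst (x : EuclideanSpace ℝ (Fin (m + 1))) :
    (euclideanHeadTail m x).1 = x 0 := rfl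

@[simp]
theorem euclideanHeadTail_snd (x : EuclideanSpace ℝ (Fin (m + 1))) (j : Fin m) :
    (euclideanHeadTail m x).2 j = x j.succ := rfl

theorem measurePreserving_euclideanHeadTail : MeasurePreserving (euclideanHeadTail m) :=
  (EuclideanSpace.volume_preserving_symm_measurableEquiv_toLp _).trans <|
    (volume_preserving_piFinSuccAbove (fun _ => ℝ) 0).trans <|
      (MeasurePreserving.id volume).prod (PiLp.volume_preserving_toLp _)

theorem norm_sq_eq_euclideanHeadTail (x : EuclideanSpace ℝ (Fin (m + 1))) :
    ‖x‖ ^ 2 = (euclideanHeadTail m x).1 ^ 2 + ‖(euclideanHeadTail m x).2‖ ^ 2 := by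
  simp only [EuclideanSpace.norm_sq_eq, Fin.sum_univ_succ, euclideanHeadTail_fst,
    euclideanHeadTail_snd, Real.norm_eq_abs, sq_abs]

theorem ball_single_eq_euclideanHeadTail_preimage {ε : ℝ} (hε : 0 ≤ ε) (a : ℝ) :
    ball (EuclideanSpace.single 0 a) ε
      = euclideanHeadTail m ⁻¹' {p | p.2 ∈ ball 0 √(ε ^ 2 - (p.1 - a) ^ 2)} := by
  ext x
  have h_snd : (euclideanHeadTail m (x - EuclideanSpace.single 0 a)).2
      = (euclideanHeadTail m x).2 := by
    ext j
    simp [Fin.succ_ne_zero]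
  have h_norm := norm_sq_eq_euclideanHeadTail (x - EuclideanSpace.single 0 a)
  simp only [euclideanHeadTail_fst, h_snd, PiLp.sub_apply, PiLp.single_apply, if_true] at h_norm
  rw [mem_preimage, mem_ofPred_eq, mem_ball, mem_ball, dist_eq_norm, dist_zero_right,
    lt_sqrt (norm_nonneg _), ← sq_lt_sq₀ (norm_nonneg _) hε, euclideanHeadTail_fst]
  constructor <;> intro <;> linarith

theorem volume_euclideanHeadTail_preimage {r : ℝ → ℝ} (hr : Measurable r) :
    volume (euclideanHeadTail m ⁻¹' {p | p.2 ∈ ball 0 (r p.1)}) =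
      ∫⁻ t, volume (ball (0 : EuclideanSpace ℝ (Fin m)) (r t)) := by
  have h_meas : MeasurableSet {p : ℝ × EuclideanSpace ℝ (Fin m) | p.2 ∈ ball 0 (r p.1)} := by
    simp only [mem_ball, dist_zero_right]
    exact measurableSet_lt (by fun_prop) (hr.comp measurable_fst)
  rw [measurePreserving_euclideanHeadTail.measure_preimage h_meas.nullMeasurableSet,
    Measure.volume_eq_prod, Measure.prod_apply h_meas]
  rfl

end euclideanHeadTail

theorem measure_ball_sqrt_sq_sub_sq_le_of_abs_le {E : Type*} [PseudoMetricSpace E]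
    [MeasurableSpace E] (μ : Measure E) (x : E) (ε : ℝ) {t u : ℝ} (h : |t| ≤ |u|) :
    μ (ball x √(ε ^ 2 - u ^ 2)) ≤ μ (ball x √(ε ^ 2 - t ^ 2)) :=
  measure_mono <| ball_subset_ball <| sqrt_le_sqrt <| by linarith [sq_le_sq.mpr h]

theorem lintegral_max_comp_sub {f : ℝ → ℝ≥0∞} (hf : ∀ t u, |t| ≤ |u| → f u ≤ f t)
    {s : ℝ} (hs : 0 ≤ s) :
    ∫⁻ t, max (f t) (f (t - s)) = (∫⁻ t, f t) + ∫⁻ t in Ioc (-(s / 2)) (s / 2), f t := by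
  have h_left : ∀ t ∈ Iic (s / 2), max (f t) (f (t - s)) = f t := fun t ht =>
    max_eq_left (hf _ _ (sq_le_sq.mp (by nlinarith [mem_Iic.mp ht])))
  have h_right : ∀ t ∈ Ioi (s / 2), max (f t) (f (t - s)) = f (t - s) := fun t ht =>
    max_eq_right (hf _ _ (sq_le_sq.mp (by nlinarith [mem_Ioi.mp ht])))
  have h_shift : ∫⁻ t in Ioi (s / 2), f (t - s) = ∫⁻ t in Ioi (-(s / 2)), f t := by
    have h_pre : (· - s) ⁻¹' Ioi (-(s / 2)) = Ioi (s / 2) := by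
      ext t
      simp only [mem_preimage, mem_Ioi]
      constructor <;> intro h <;> linarith
    rw [← (measurePreserving_sub_right volume s).setLIntegral_comp_preimage_emb
      (measurableEmbedding_subRight s) f, h_pre]
  have h_split : ∫⁻ t in Iic (s / 2), f t
      = (∫⁻ t in Iic (-(s / 2)), f t) + ∫⁻ t in Ioc (-(s / 2)) (s / 2), f t := by
    rw [← lintegral_union measurableSet_Ioc (Iic_disjoint_Ioc le_rfl),
      Iic_union_Ioc_eq_Iic (by linarith)]
  calc ∫⁻ t, max (f t) (f (t - s))
      = (∫⁻ t in Iic (s / 2), max (f t) (f (t - s)))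
          + ∫⁻ t in Ioi (s / 2), max (f t) (f (t - s)) := by
        rw [← compl_Iic, lintegral_add_compl _ measurableSet_Iic]
    _ = (∫⁻ t in Iic (s / 2), f t) + ∫⁻ t in Ioi (-(s / 2)), f t := by
        rw [setLIntegral_congr_fun measurableSet_Iic h_left,
          setLIntegral_congr_fun measurableSet_Ioi h_right, h_shift]
    _ = ((∫⁻ t in Iic (-(s / 2)), f t) + ∫⁻ t in Ioi (-(s / 2)), f t)
          + ∫⁻ t in Ioc (-(s / 2)) (s / 2), f t := by
        rw [h_split, add_right_comm]
    _ = (∫⁻ t, f t) + ∫⁻ t in Ioc (-(s / 2)) (s / 2), f t := by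
        rw [← compl_Iic, lintegral_add_compl _ measurableSet_Iic]

theorem integral_sqrt_sq_sub_sq_pow {ε a : ℝ} (hε : 0 < ε) (ha : 0 ≤ a) (haε : a ≤ ε) (m : ℕ) :
    ∫ t in -a..a, √(ε ^ 2 - t ^ 2) ^ m
      = 2 * ε ^ (m + 1) * ∫ u in arccos (a / ε)..(π / 2), sin u ^ (m + 1) := by
  set g : ℝ → ℝ := fun t => √(ε ^ 2 - t ^ 2) ^ m with hg_def
  set θ := arccos (a / ε) with hθ_def
  have hg : Continuous g := by fun_prop
  have hθ_nonneg : 0 ≤ θ := arccos_nonneg _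
  have hθ_le : θ ≤ π / 2 := arccos_le_pi_div_two.mpr (by positivity)
  have h_cos : ε * cos θ = a := by
    rw [hθ_def, cos_arccos (by linarith [div_nonneg ha hε.le]) ((div_le_one hε).mpr haε)]
    field_simp
  have h_even : ∫ t in -a..0, g t = ∫ t in 0..a, g t := by
    simpa [hg_def] using (intervalIntegral.integral_comp_neg (a := 0) (b := a) g).symm
  have h_integrand : ∀ u ∈ uIcc θ (π / 2),
      (g ∘ fun u => ε * cos u) u * -(ε * sin u) = -(ε ^ (m + 1) * sin u ^ (m + 1)) := by
    intro u hu
    rw [uIcc_of_le hθ_le] at hu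
    have h_sin : 0 ≤ sin u :=
      sin_nonneg_of_nonneg_of_le_pi (hθ_nonneg.trans hu.1) (hu.2.trans (by linarith [pi_pos]))
    have h_sq : ε ^ 2 - (ε * cos u) ^ 2 = (ε * sin u) ^ 2 := by
      linear_combination (-ε ^ 2) * sin_sq_add_cos_sq u
    simp only [Function.comp, hg_def, h_sq, sqrt_sq (mul_nonneg hε.le h_sin)]
    ring
  have h_subst : ∫ t in 0..a, g t = ε ^ (m + 1) * ∫ u in θ..(π / 2), sin u ^ (m + 1) := by
    have h_deriv : ∀ u ∈ uIcc θ (π / 2), HasDerivAt (fun u => ε * cos u) (-(ε * sin u)) u :=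
      fun u _ => by simpa using (hasDerivAt_cos u).const_mul ε
    rw [intervalIntegral.integral_symm, ← h_cos, ← mul_zero ε, ← cos_pi_div_two,
      ← intervalIntegral.integral_comp_mul_deriv h_deriv (by fun_prop) hg,
      intervalIntegral.integral_congr h_integrand, intervalIntegral.integral_neg,
      intervalIntegral.integral_const_mul, neg_neg]
  calc ∫ t in -a..a, g t = (∫ t in -a..0, g t) + ∫ t in 0..a, g t :=
        (intervalIntegral.integral_add_adjacent_intervals (hg.intervalIntegrable _ _)
          (hg.intervalIntegrable _ _)).symm
    _ = 2 * ε ^ (m + 1) * ∫ u in θ..(π / 2), sin u ^ (m + 1) := by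
        rw [h_even, h_subst]
        ring

theorem setLIntegral_addHaar_ball_sqrt {E : Type*} [NormedAddCommGroup E] [NormedSpace ℝ E]
    [MeasurableSpace E] [BorelSpace E] [FiniteDimensional ℝ E] (μ : Measure E)
    [μ.IsAddHaarMeasure] {ε a : ℝ} (hε : 0 < ε) (ha : 0 ≤ a) (haε : a ≤ ε) :
    ∫⁻ t in Ioc (-a) a, μ (ball 0 √(ε ^ 2 - t ^ 2))
      = ENNReal.ofReal (2 * ε * (μ (ball 0 ε)).toReal *
          ∫ u in arccos (a / ε)..(π / 2), sin u ^ (finrank ℝ E + 1)) := by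
  have h_ball : ∀ t ∈ Ioo (-a) a, μ (ball 0 √(ε ^ 2 - t ^ 2))
      = ENNReal.ofReal (√(ε ^ 2 - t ^ 2) ^ finrank ℝ E) * μ (ball 0 1) :=
    fun t ht => Measure.addHaar_ball_of_pos μ 0 (sqrt_pos.2 (by nlinarith [ht.1, ht.2]))
  have h_int : IntegrableOn (fun t => √(ε ^ 2 - t ^ 2) ^ finrank ℝ E) (Ioo (-a) a) :=
    (by fun_prop : Continuous fun t : ℝ => √(ε ^ 2 - t ^ 2) ^ finrank ℝ E)
      |>.integrableOn_Icc.mono_set Ioo_subset_Icc_self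
  have h_unit : μ (ball 0 1) = ENNReal.ofReal (μ (ball 0 1)).toReal :=
    (ENNReal.ofReal_toReal measure_ball_lt_top.ne).symm
  rw [setLIntegral_congr Ioo_ae_eq_Ioc.symm, setLIntegral_congr_fun measurableSet_Ioo h_ball,
    lintegral_mul_const' _ _ measure_ball_lt_top.ne,
    ← ofReal_integral_eq_lintegral_ofReal h_int (ae_of_all _ fun t => by positivity),
    ← integral_Ioc_eq_integral_Ioo, ← intervalIntegral.integral_of_le (by linarith),
    integral_sqrt_sq_sub_sq_pow hε ha haε, Measure.addHaar_ball_of_pos μ 0 hε, ENNReal.toReal_mul,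
    ENNReal.toReal_ofReal (by positivity), h_unit, ← ENNReal.ofReal_mul' ENNReal.toReal_nonneg,
    ENNReal.toReal_ofReal ENNReal.toReal_nonneg]
  congr 1
  ring

theorem volume_union_two_balls_general (n : ℕ) (hn : 1 ≤ n) (ε s : ℝ)
    (hε : 0 < ε) (hs2 : s ≤ 2 * ε)
    (x₁ x₂ : EuclideanSpace ℝ (Fin n)) (hd : dist x₁ x₂ = s) :
    volume (Metric.ball x₁ ε ∪ Metric.ball x₂ ε)
      = volume (Metric.ball (0 : EuclideanSpace ℝ (Fin n)) ε)
        + ENNReal.ofReal (2 * ε *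
            (volume (Metric.ball (0 : EuclideanSpace ℝ (Fin (n - 1))) ε)).toReal *
            ∫ t in Real.arccos (s / (2 * ε))..(π / 2), Real.sin t ^ n) := by
  obtain ⟨m, rfl⟩ : ∃ m, n = m + 1 := ⟨n - 1, by omega⟩
  have hs : 0 ≤ s := hd ▸ dist_nonneg
  set c : EuclideanSpace ℝ (Fin (m + 1)) := EuclideanSpace.single 0 s
  have hc : dist 0 c = s := by simp [c, abs_of_nonneg hs]
  set ρ : ℝ → ℝ := fun t => √(ε ^ 2 - t ^ 2)
  have h_zero : EuclideanSpace.single (0 : Fin (m + 1)) (0 : ℝ) = 0 := by simp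
  have h_union : ball 0 ε ∪ ball c ε
      = euclideanHeadTail m ⁻¹' {p | p.2 ∈ ball 0 (max (ρ p.1) (ρ (p.1 - s)))} := by
    rw [← h_zero, ball_single_eq_euclideanHeadTail_preimage hε.le,
      ball_single_eq_euclideanHeadTail_preimage hε.le]
    ext x
    simp only [mem_union, mem_preimage, mem_ofPred_eq, mem_ball, lt_max_iff, sub_zero, ρ]
  have h_mono : Monotone fun r => volume (ball (0 : EuclideanSpace ℝ (Fin m)) r) :=
    fun _ _ h => measure_mono (ball_subset_ball h)
  rw [volume_ball_union_ball_eq_of_dist_eq (hd.trans hc.symm), h_union,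
    volume_euclideanHeadTail_preimage (r := fun t => max (ρ t) (ρ (t - s))) (by fun_prop)]
  simp only [h_mono.map_max]
  rw [lintegral_max_comp_sub (f := fun t => volume (ball (0 : EuclideanSpace ℝ (Fin m)) (ρ t)))
      (fun _ _ => measure_ball_sqrt_sq_sub_sq_le_of_abs_le volume 0 ε) hs, ← h_zero,
    ball_single_eq_euclideanHeadTail_preimage hε.le,
    volume_euclideanHeadTail_preimage (r := fun t => ρ (t - 0)) (by fun_prop),
    setLIntegral_addHaar_ball_sqrt volume hε (by linarith) (by linarith)]
  simp only [sub_zero, finrank_euclideanSpace_fin, div_div]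

/-- The volume of the union of two overlapping Euclidean `ε`-balls whose centers
are at distance `s ∈ (0, 2ε]` equals
`vol(B_ε(ℝⁿ)) + 2ε · vol(B_ε(ℝⁿ⁻¹)) · ∫_θ^{π/2} sinⁿ t dt`, where `cos θ = s/(2ε)`. -/
theorem volume_union_two_balls (n : ℕ) (hn : 1 ≤ n) (ε s : ℝ)
    (hε : 0 < ε) (hs : 0 < s) (hs2 : s ≤ 2 * ε)
    (x₁ x₂ : EuclideanSpace ℝ (Fin n)) (hd : dist x₁ x₂ = s) :
    volume (Metric.ball x₁ ε ∪ Metric.ball x₂ ε)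
      = volume (Metric.ball (0 : EuclideanSpace ℝ (Fin n)) ε)
        + ENNReal.ofReal (2 * ε *
            (volume (Metric.ball (0 : EuclideanSpace ℝ (Fin (n - 1))) ε)).toReal *
            ∫ t in Real.arccos (s / (2 * ε))..(π / 2), Real.sin t ^ n) :=
  volume_union_two_balls_general n hn ε s hε hs2 x₁ x₂ hd
end

section
/- Let x₁, …, x_{N+1} be points on a line in ℝⁿ with consecutive distances |x_i x_{i+1}| = s_i ∈ (0, 2ε²] and ε small. Then vol(⋃_{i=1}^{N+1} B_ε(x_i)) = vol(B_ε(ℝⁿ)) + vol(B_ε(ℝ^{n-1})) · Σ_{i=1}^N s_i + O(ε^{n+1}) · Σ_{i=1}^N s_i, i.e., the volume of the ε-ball tube along a segment of length L is vol(B_ε(ℝⁿ)) + vol(B_ε(ℝ^{n-1})) · L up to an error of order ε^{n+1} · L. -/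
/-! Since the centres lie in order on a line and balls are convex, a point lying in two of the
balls lies in every ball centred between them, so the union is the first ball plus the disjoint
crescents `B_ε(x_{i+1}) \ B_ε(x_i)`. A crescent with gap `s` is sliced by the lines parallel to
its axis: the line at distance `r < ε` meets it in an interval of length at most `s`, with
equality once `r² < ε² - s²/4`. Its volume thus lies between `s · vol B_{√(ε² - s²/4)}` and
`s · vol B_ε` in one dimension less, and for `s ≤ 2ε²` these differ by a factor `1 - O(ε²)`. -/

open MeasureTheory Metric Set Module WithLp

section Segment

variable {E : Type*} [SeminormedAddCommGroup E] [NormedSpace ℝ E]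

theorem Wbtw.mem_ball_of_mem_ball {a b c y : E} {ε : ℝ} (h : Wbtw ℝ a b c)
    (ha : a ∈ ball y ε) (hc : c ∈ ball y ε) : b ∈ ball y ε :=
  (convex_ball y ε).segment_subset ha hc (mem_segment_iff_wbtw.mpr h)

variable [MeasurableSpace E] [OpensMeasurableSpace E]

theorem measure_iUnion_ball_eq_add_sum_sdiff (μ : Measure E) (ε : ℝ) :
    ∀ {N : ℕ} (x : Fin (N + 1) → E), (∀ i j k, i ≤ j → j ≤ k → Wbtw ℝ (x i) (x j) (x k)) →
      μ (⋃ i, ball (x i) ε) =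
        μ (ball (x 0) ε) + ∑ i : Fin N, μ (ball (x i.succ) ε \ ball (x i.castSucc) ε)
  | 0, x, _ => by simp [iUnion_fin_add_one_eq_iUnion_succ]
  | N + 1, x, hx => by
    have hnew : ball (x (Fin.last _)) ε \ ⋃ i : Fin (N + 1), ball (x i.castSucc) ε =
        ball (x (Fin.last _)) ε \ ball (x (Fin.last N).castSucc) ε := by
      refine (sdiff_subset_sdiff_right (subset_iUnion_of_subset (Fin.last N) subset_rfl)).antisymm
        fun y ⟨hy, hyN⟩ => ⟨hy, fun hyj => hyN ?_⟩
      obtain ⟨j, hj⟩ := mem_iUnion.mp hyj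
      have hbtw : Wbtw ℝ (x j.castSucc) (x (Fin.last N).castSucc) (x (Fin.last _)) :=
        hx _ _ _ (Fin.castSucc_le_castSucc_iff.mpr (Fin.le_last j)) (Fin.le_last _)
      exact mem_ball_comm.mp
        (hbtw.mem_ball_of_mem_ball (mem_ball_comm.mp hj) (mem_ball_comm.mp hy))
    rw [iUnion_fin_add_one_eq_iUnion_castSucc, Function.comp_def, ← union_sdiff_self,
      measure_union disjoint_sdiff_right
        (measurableSet_ball.diff (MeasurableSet.iUnion fun _ => measurableSet_ball)), hnew,
      measure_iUnion_ball_eq_add_sum_sdiff μ ε (fun i => x i.castSucc)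
        fun i j k hij hjk => hx _ _ _ (Fin.castSucc_le_castSucc_iff.mpr hij)
          (Fin.castSucc_le_castSucc_iff.mpr hjk), Fin.sum_univ_castSucc, add_assoc]
    simp only [Fin.castSucc_zero, Fin.succ_castSucc, Fin.succ_last]

end Segment

theorem Real.volume_ball_sdiff_ball_zero_le {s : ℝ} (hs : 0 ≤ s) (h : ℝ) :
    volume (ball s h \ ball 0 h) ≤ ENNReal.ofReal s := by
  calc volume (ball s h \ ball 0 h) ≤ volume (Icc h (h + s)) := by
        refine measure_mono fun t ⟨hts, ht0⟩ => ?_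
        simp only [Real.ball_eq_Ioo, mem_Ioo, not_and_or, not_lt] at hts ht0
        exact ⟨by rcases ht0 with ht0 | ht0 <;> linarith, by linarith⟩
    _ = ENNReal.ofReal s := by rw [Real.volume_Icc, add_sub_cancel_left]

theorem Real.le_volume_ball_sdiff_ball_zero {s h : ℝ} (hsh : s < 2 * h) :
    ENNReal.ofReal s ≤ volume (ball s h \ ball 0 h) := by
  calc ENNReal.ofReal s = volume (Ioo h (h + s)) := by rw [Real.volume_Ioo, add_sub_cancel_left]
    _ ≤ volume (ball s h \ ball 0 h) := by
        refine measure_mono fun t ⟨ht, hts⟩ => ?_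
        simp only [Real.ball_eq_Ioo, mem_sdiff, mem_Ioo, not_and_or, not_lt]
        exact ⟨⟨by linarith, by linarith⟩, Or.inr (by linarith)⟩

theorem WithLp.toLp_mem_ball_toLp_iff {F : Type*} [SeminormedAddCommGroup F] {ε : ℝ}
    (hε : 0 ≤ ε) (t c : ℝ) (w : F) :
    toLp 2 (t, w) ∈ ball (toLp 2 (c, (0 : F))) ε ↔ t ∈ ball c √(ε ^ 2 - ‖w‖ ^ 2) := by
  simp only [mem_ball, prod_dist_eq_of_L2, toLp_fst, toLp_snd, dist_zero_right]
  rw [Real.sqrt_lt (by positivity) hε, Real.lt_sqrt dist_nonneg, lt_sub_iff_add_lt]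

theorem mul_one_sub_sq_le_sqrt_sq_sub {ε s : ℝ} (hε₀ : 0 ≤ ε) (hε₁ : ε ≤ 1) (hs₀ : 0 ≤ s)
    (hs : s ≤ 2 * ε ^ 2) : ε * (1 - ε ^ 2) ≤ √(ε ^ 2 - s ^ 2 / 4) := by
  have hε2 : ε ^ 2 ≤ 1 := by nlinarith
  have hs2 : s ^ 2 ≤ 4 * ε ^ 4 := by nlinarith
  refine Real.le_sqrt_of_sq_le ?_
  nlinarith [pow_le_pow_of_le_one hε₀ hε₁ (by norm_num : 4 ≤ 6)]

section Crescent

variable {F : Type*} [NormedAddCommGroup F] [InnerProductSpace ℝ F] [FiniteDimensional ℝ F]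
  [MeasurableSpace F] [BorelSpace F]

theorem volume_ball_toLp_sdiff_ball_eq_lintegral {ε : ℝ} (hε : 0 ≤ ε) (s : ℝ) :
    volume (ball (toLp 2 (s, (0 : F))) ε \ ball (toLp 2 (0, 0)) ε) =
      ∫⁻ w : F, volume (ball s √(ε ^ 2 - ‖w‖ ^ 2) \ ball 0 √(ε ^ 2 - ‖w‖ ^ 2)) := by
  have hmp := WithLp.volume_preserving_toLp ℝ F
  have hmeas : MeasurableSet (ball (toLp 2 (s, (0 : F))) ε \ ball (toLp 2 (0, 0)) ε) :=
    measurableSet_ball.diff measurableSet_ball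
  rw [← hmp.measure_preimage hmeas.nullMeasurableSet, Measure.volume_eq_prod,
    Measure.prod_apply_symm (hmp.measurable hmeas)]
  refine lintegral_congr fun w => congrArg volume ?_
  ext t
  simp only [mem_preimage, mem_sdiff, toLp_mem_ball_toLp_iff hε]

theorem volume_ball_toLp_sdiff_ball_le {ε s : ℝ} (hε : 0 ≤ ε) (hs : 0 ≤ s) :
    volume (ball (toLp 2 (s, (0 : F))) ε \ ball (toLp 2 (0, 0)) ε) ≤
      ENNReal.ofReal s * volume (ball (0 : F) ε) := by
  rw [volume_ball_toLp_sdiff_ball_eq_lintegral hε, ← lintegral_indicator_const measurableSet_ball]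
  refine lintegral_mono fun w => ?_
  by_cases hw : w ∈ ball (0 : F) ε
  · rw [indicator_of_mem hw]
    exact Real.volume_ball_sdiff_ball_zero_le hs _
  · have hempty : √(ε ^ 2 - ‖w‖ ^ 2) = 0 := by
      rw [mem_ball, dist_zero_right, not_lt] at hw
      exact Real.sqrt_eq_zero'.mpr (by nlinarith)
    simp [hempty]

theorem le_volume_ball_toLp_sdiff_ball {ε s : ℝ} (hε : 0 ≤ ε) :
    ENNReal.ofReal s * volume (ball (0 : F) √(ε ^ 2 - s ^ 2 / 4)) ≤
      volume (ball (toLp 2 (s, (0 : F))) ε \ ball (toLp 2 (0, 0)) ε) := by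
  rw [volume_ball_toLp_sdiff_ball_eq_lintegral hε, ← lintegral_indicator_const measurableSet_ball]
  refine lintegral_mono fun w => ?_
  by_cases hw : w ∈ ball (0 : F) √(ε ^ 2 - s ^ 2 / 4)
  · rw [indicator_of_mem hw]
    rw [mem_ball, dist_zero_right, Real.lt_sqrt (norm_nonneg w)] at hw
    have : s / 2 < √(ε ^ 2 - ‖w‖ ^ 2) := Real.lt_sqrt_of_sq_lt (by linarith)
    exact Real.le_volume_ball_sdiff_ball_zero (by linarith)
  · simp [hw]

variable {E : Type*} [NormedAddCommGroup E] [InnerProductSpace ℝ E] [FiniteDimensional ℝ E]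
  [MeasurableSpace E] [BorelSpace E]

theorem exists_measurePreserving_isometry_of_dist_eq (hEF : finrank ℝ E = finrank ℝ F)
    {p q : E} {p' q' : F} (h : dist p q = dist p' q') :
    ∃ φ : E → F, MeasurePreserving φ ∧ Isometry φ ∧ φ p = p' ∧ φ q = q' := by
  let g : E ≃ₗᵢ[ℝ] F := (stdOrthonormalBasis ℝ E).equiv (stdOrthonormalBasis ℝ F) (finCongr hEF)
  have hnorm : ‖g (q - p)‖ = ‖q' - p'‖ := by
    rw [LinearIsometryEquiv.norm_map, ← dist_eq_norm, ← dist_eq_norm, dist_comm, h, dist_comm]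
  -- the Householder reflection exchanging two vectors of equal length
  let f := g.trans (Submodule.reflection (ℝ ∙ (g (q - p) - (q' - p')))ᗮ)
  have hf : f (q - p) = q' - p' := Submodule.reflection_sub hnorm
  refine ⟨fun x => f (x - p) + p', ?_, ?_, by simp, by simp [hf]⟩
  · exact (measurePreserving_add_right volume p').comp
      (f.measurePreserving.comp (measurePreserving_sub_right volume p))
  · exact Isometry.of_dist_eq fun x y => by simp [dist_eq_norm, ← map_sub]

theorem volume_ball_sdiff_ball_eq_of_dist_eq (hEF : finrank ℝ E = finrank ℝ F)
    {p q : E} {p' q' : F} (h : dist p q = dist p' q') (ε : ℝ) :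
    volume (ball q ε \ ball p ε) = volume (ball q' ε \ ball p' ε) := by
  obtain ⟨φ, hφ, hiso, rfl, rfl⟩ := exists_measurePreserving_isometry_of_dist_eq hEF h
  rw [← hφ.measure_preimage (measurableSet_ball.diff measurableSet_ball).nullMeasurableSet,
    preimage_sdiff, hiso.preimage_ball, hiso.preimage_ball]

theorem abs_volume_ball_sdiff_ball_sub_le (hEF : finrank ℝ E = finrank ℝ F + 1) (p q : E)
    {ε : ℝ} (hε₀ : 0 < ε) (hε₁ : ε < 1) (hpq : dist p q ≤ 2 * ε ^ 2) :
    |(volume (ball q ε \ ball p ε)).toReal - (volume (ball (0 : F) ε)).toReal * dist p q| ≤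
      finrank ℝ F * ε ^ 2 * (volume (ball (0 : F) ε)).toReal * dist p q := by
  set s := dist p q
  set d := finrank ℝ F
  set V := volume (ball (0 : F) ε)
  have hs : 0 ≤ s := dist_nonneg
  have hcres : volume (ball q ε \ ball p ε) =
      volume (ball (toLp 2 (s, (0 : F))) ε \ ball (toLp 2 (0, 0)) ε) :=
    volume_ball_sdiff_ball_eq_of_dist_eq
      (by rw [hEF, (WithLp.linearEquiv 2 ℝ (ℝ × F)).finrank_eq, finrank_prod, finrank_self,
        add_comm])
      (by rw [dist_toLp_fst, Real.dist_eq, zero_sub, abs_neg, abs_of_nonneg hs]) ε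
  have hfin : volume (ball q ε \ ball p ε) ≠ ⊤ :=
    ((measure_mono sdiff_subset).trans_lt measure_ball_lt_top).ne
  have hupper : (volume (ball q ε \ ball p ε)).toReal ≤ V.toReal * s := by
    calc _ ≤ (ENNReal.ofReal s * V).toReal := ENNReal.toReal_mono
            (ENNReal.mul_ne_top ENNReal.ofReal_ne_top measure_ball_lt_top.ne)
            (hcres ▸ volume_ball_toLp_sdiff_ball_le hε₀.le hs)
      _ = V.toReal * s := by rw [ENNReal.toReal_mul, ENNReal.toReal_ofReal hs, mul_comm]
  have hlower : (1 - ε ^ 2) ^ d * V.toReal * s ≤ (volume (ball q ε \ ball p ε)).toReal := by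
    have hball : volume (ball (0 : F) ((1 - ε ^ 2) * ε)) ≤
        volume (ball (0 : F) √(ε ^ 2 - s ^ 2 / 4)) :=
      measure_mono (ball_subset_ball (by
        linarith [mul_one_sub_sq_le_sqrt_sq_sub hε₀.le hε₁.le hs hpq]))
    rw [Measure.addHaar_ball_mul_of_pos _ _ (by nlinarith)] at hball
    have := ENNReal.toReal_mono hfin <| hcres ▸
      (mul_le_mul_right hball (ENNReal.ofReal s)).trans (le_volume_ball_toLp_sdiff_ball hε₀.le)
    rw [ENNReal.toReal_mul, ENNReal.toReal_mul, ENNReal.toReal_ofReal hs,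
      ENNReal.toReal_ofReal (pow_nonneg (by nlinarith) _)] at this
    linarith
  have hbernoulli : 1 - d * ε ^ 2 ≤ (1 - ε ^ 2) ^ d := by
    simpa [← sub_eq_add_neg] using one_add_mul_le_pow (a := -ε ^ 2) (by nlinarith) d
  have hVs : 0 ≤ V.toReal * s := mul_nonneg ENNReal.toReal_nonneg hs
  rw [abs_sub_le_iff]
  constructor <;> nlinarith [mul_le_mul_of_nonneg_right hbernoulli hVs]

end Crescent

/-- Volume of an `ε`-ball tube along a segment: for collinear points
`x₁, …, x_{N+1}` in `ℝⁿ` with consecutive distances `sᵢ ∈ (0, 2ε²]`,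
`vol(⋃ B_ε(xᵢ)) = vol(B_ε(ℝⁿ)) + vol(B_ε(ℝⁿ⁻¹)) · Σ sᵢ` up to an error of
order `ε^{n+1} · Σ sᵢ`. -/
theorem volume_ball_tube_along_segment (n : ℕ) (hn : 1 ≤ n) :
    ∃ C > (0 : ℝ), ∃ ε₀ > (0 : ℝ), ∀ ε ∈ Set.Ioo (0 : ℝ) ε₀, ∀ N : ℕ,
      ∀ x : Fin (N + 1) → EuclideanSpace ℝ (Fin n),
        (∀ i : Fin N, 0 < dist (x i.castSucc) (x i.succ) ∧
          dist (x i.castSucc) (x i.succ) ≤ 2 * ε ^ 2) →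
        (∀ i j k : Fin (N + 1), i ≤ j → j ≤ k →
          dist (x i) (x k) = dist (x i) (x j) + dist (x j) (x k)) →
        |(volume (⋃ i, Metric.ball (x i) ε)).toReal
            - ((volume (Metric.ball (0 : EuclideanSpace ℝ (Fin n)) ε)).toReal
              + (volume (Metric.ball (0 : EuclideanSpace ℝ (Fin (n - 1))) ε)).toReal
                * ∑ i : Fin N, dist (x i.castSucc) (x i.succ))|
          ≤ C * ε ^ (n + 1) * ∑ i : Fin N, dist (x i.castSucc) (x i.succ) := by
  obtain ⟨m, rfl⟩ : ∃ m, n = m + 1 := ⟨n - 1, by omega⟩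
  set c := (volume (ball (0 : EuclideanSpace ℝ (Fin m)) 1)).toReal
  refine ⟨m * c + 1, by positivity, 1, one_pos, fun ε ⟨hε₀, hε₁⟩ N x hgap hcol => ?_⟩
  have hV : (volume (ball (0 : EuclideanSpace ℝ (Fin m)) ε)).toReal = ε ^ m * c := by
    rw [Measure.addHaar_ball_of_pos _ _ hε₀, ENNReal.toReal_mul,
      ENNReal.toReal_ofReal (by positivity), finrank_euclideanSpace_fin]
  have hfin : ∀ i : Fin N, volume (ball (x i.succ) ε \ ball (x i.castSucc) ε) ≠ ⊤ := fun i =>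
    ((measure_mono sdiff_subset).trans_lt measure_ball_lt_top).ne
  rw [measure_iUnion_ball_eq_add_sum_sdiff volume ε x
      fun i j k hij hjk => dist_add_dist_eq_iff.mp (hcol i j k hij hjk).symm,
    Measure.addHaar_ball_center, ENNReal.toReal_add measure_ball_lt_top.ne
      (ENNReal.sum_ne_top.mpr fun i _ => hfin i), ENNReal.toReal_sum fun i _ => hfin i,
    add_sub_add_left_eq_sub, Finset.mul_sum, ← Finset.sum_sub_distrib, Nat.add_sub_cancel]
  calc _ ≤ ∑ i : Fin N, m * ε ^ 2 * (ε ^ m * c) * dist (x i.castSucc) (x i.succ) :=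
        (Finset.abs_sum_le_sum_abs _ _).trans <| Finset.sum_le_sum fun i _ => by
          simpa [hV] using abs_volume_ball_sdiff_ball_sub_le (F := EuclideanSpace ℝ (Fin m))
            (by simp) (x i.castSucc) (x i.succ) hε₀ hε₁ (hgap i).2
    _ = m * c * ε ^ (m + 1 + 1) * ∑ i : Fin N, dist (x i.castSucc) (x i.succ) := by
        rw [Finset.mul_sum]
        exact Finset.sum_congr rfl fun i _ => by ring
    _ ≤ (m * c + 1) * ε ^ (m + 1 + 1) * ∑ i : Fin N, dist (x i.castSucc) (x i.succ) := by
        gcongr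
        linarith
end
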